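/- arXiv:0802.1464 — 2 statements merged into one kernel-verified Lean document; each statement's English description precedes it below -/
import Mathlib

section
/- (One-qubit channel normal form inequality.) Let λ₁, λ₂ ∈ [−1, 1] be real numbers and let t be a real number with t² = (1−λ₁²)·(1−λ₂²). Let w_I, w_X, w_Y, w_Z be arbitrary real numbers (Pauli coefficients of an input Hermitian matrix), and define the output coefficients w'_X = λ₁·w_X, w'_Y = λ₂·w_Y, w'_Z = t·w_I + λ₁·λ₂·w_Z. Then with β = max(λ₁², λ₂²), one has w'_X² + w'_Y² + w'_Z² ≤ (1−β)·w_I² + β·(w_X² + w_Y² + w_Z²), and β ∈ [0,1]. -/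
/-- One-qubit channel normal form inequality: with `β = max(λ₁², λ₂²)`, the output Pauli
coefficients of the Ruskai–Szarek–Werner normal form satisfy
`w'_X² + w'_Y² + w'_Z² ≤ (1-β)·w_I² + β·(w_X² + w_Y² + w_Z²)`, and `β ∈ [0,1]`. -/
theorem rsw_normal_form_inequality (l₁ l₂ t : ℝ)
    (hl₁ : l₁ ∈ Set.Icc (-1 : ℝ) 1) (hl₂ : l₂ ∈ Set.Icc (-1 : ℝ) 1)
    (ht : t ^ 2 = (1 - l₁ ^ 2) * (1 - l₂ ^ 2))
    (wI wX wY wZ : ℝ) :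
    (l₁ * wX) ^ 2 + (l₂ * wY) ^ 2 + (t * wI + l₁ * l₂ * wZ) ^ 2 ≤
      (1 - max (l₁ ^ 2) (l₂ ^ 2)) * wI ^ 2 +
        max (l₁ ^ 2) (l₂ ^ 2) * (wX ^ 2 + wY ^ 2 + wZ ^ 2) ∧
    max (l₁ ^ 2) (l₂ ^ 2) ∈ Set.Icc (0 : ℝ) 1 := by
  obtain ⟨h1a, h1b⟩ := hl₁
  obtain ⟨h2a, h2b⟩ := hl₂
  have hs1 : l₁ ^ 2 ≤ 1 := by nlinarith
  have hs2 : l₂ ^ 2 ≤ 1 := by nlinarith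
  set a := Real.sqrt (1 - l₁ ^ 2) with ha0
  set b := Real.sqrt (1 - l₂ ^ 2) with hb0
  have ha : a ^ 2 = 1 - l₁ ^ 2 := Real.sq_sqrt (by linarith)
  have hb : b ^ 2 = 1 - l₂ ^ 2 := Real.sq_sqrt (by linarith)
  have hfac : (t - a * b) * (t + a * b) = 0 := by nlinarith [ht, ha, hb]
  have hsign : t = a * b ∨ t = -(a * b) := by
    rcases mul_eq_zero.1 hfac with h | h
    · left; linarith
    · right; linarith
  have hA1 : a ^ 2 * (b ^ 2 * wI ^ 2) = (1 - l₁ ^ 2) * ((1 - l₂ ^ 2) * wI ^ 2) := by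
    rw [ha, hb]
  have hA2 : a ^ 2 * (l₂ ^ 2 * wI ^ 2) = (1 - l₁ ^ 2) * (l₂ ^ 2 * wI ^ 2) := by rw [ha]
  have hA3 : b ^ 2 * (l₁ ^ 2 * wZ ^ 2) = (1 - l₂ ^ 2) * (l₁ ^ 2 * wZ ^ 2) := by rw [hb]
  have hA4 : b ^ 2 * (l₁ ^ 2 * wI ^ 2) = (1 - l₂ ^ 2) * (l₁ ^ 2 * wI ^ 2) := by rw [hb]
  have hA5 : a ^ 2 * (l₂ ^ 2 * wZ ^ 2) = (1 - l₁ ^ 2) * (l₂ ^ 2 * wZ ^ 2) := by rw [ha]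
  have key1 : (t * wI + l₁ * l₂ * wZ) ^ 2 ≤ (1 - l₁ ^ 2) * wI ^ 2 + l₁ ^ 2 * wZ ^ 2 := by
    rcases hsign with h | h <;> subst h <;>
      nlinarith [sq_nonneg (a * l₂ * wI - b * l₁ * wZ), sq_nonneg (a * l₂ * wI + b * l₁ * wZ), hA1, hA2, hA3]
  have key2 : (t * wI + l₁ * l₂ * wZ) ^ 2 ≤ (1 - l₂ ^ 2) * wI ^ 2 + l₂ ^ 2 * wZ ^ 2 := by
    rcases hsign with h | h <;> subst h <;>
      nlinarith [sq_nonneg (b * l₁ * wI - a * l₂ * wZ), sq_nonneg (b * l₁ * wI + a * l₂ * wZ), hA1, hA4, hA5]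
  constructor
  · rcases max_cases (l₁ ^ 2) (l₂ ^ 2) with ⟨he, hge⟩ | ⟨he, hgt⟩ <;> rw [he]
    · have hy : l₂ ^ 2 * wY ^ 2 ≤ l₁ ^ 2 * wY ^ 2 :=
        mul_le_mul_of_nonneg_right hge (sq_nonneg wY)
      calc (l₁ * wX) ^ 2 + (l₂ * wY) ^ 2 + (t * wI + l₁ * l₂ * wZ) ^ 2
          ≤ l₁ ^ 2 * wX ^ 2 + l₁ ^ 2 * wY ^ 2 + ((1 - l₁ ^ 2) * wI ^ 2 + l₁ ^ 2 * wZ ^ 2) := by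
            rw [mul_pow, mul_pow]; linarith [key1, hy]
        _ = (1 - l₁ ^ 2) * wI ^ 2 + l₁ ^ 2 * (wX ^ 2 + wY ^ 2 + wZ ^ 2) := by ring
    · have hx : l₁ ^ 2 * wX ^ 2 ≤ l₂ ^ 2 * wX ^ 2 :=
        mul_le_mul_of_nonneg_right hgt.le (sq_nonneg wX)
      calc (l₁ * wX) ^ 2 + (l₂ * wY) ^ 2 + (t * wI + l₁ * l₂ * wZ) ^ 2
          ≤ l₂ ^ 2 * wX ^ 2 + l₂ ^ 2 * wY ^ 2 + ((1 - l₂ ^ 2) * wI ^ 2 + l₂ ^ 2 * wZ ^ 2) := by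
            rw [mul_pow, mul_pow]; linarith [key2, hx]
        _ = (1 - l₂ ^ 2) * wI ^ 2 + l₂ ^ 2 * (wX ^ 2 + wY ^ 2 + wZ ^ 2) := by ring
  · exact ⟨le_max_iff.2 (Or.inl (sq_nonneg _)), max_le hs1 hs2⟩
end

section
/- (Core inequality of the gate step.) Let k ≥ 1, let μ ∈ [0, 1] and C ≥ 0 be real numbers, and let f be a real-valued function on the set of all strings R : Fin k → {I, X, Y, Z} of Pauli labels. For such a string define supp(R) = {j : R_j ≠ I}. Suppose that for every subset a ⊆ Fin k, Σ_{R : supp(R) ⊆ a} f(R)² ≤ C·2^{|a|}. Then Σ_R μ^{2|supp(R)|}·f(R)² ≤ C·(1+μ²)^k, where the sum runs over all 4^k strings R. -/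
/-- The support of a string of Pauli labels `R : Fin k → Fin 4`: the set of positions where
the label differs from the identity label `0`. -/
def pauliSupp {k : ℕ} (R : Fin k → Fin 4) : Finset (Fin k) :=
  Finset.univ.filter (fun j => R j ≠ 0)

lemma sum_powerset_const_pow {k : ℕ} (s : Finset (Fin k)) (t u : ℝ) :
    ∑ b ∈ s.powerset, t ^ b.card * u ^ (s.card - b.card) = (t + u) ^ s.card := by
  rw [← Finset.prod_const (t + u), Finset.prod_add]
  refine Finset.sum_congr rfl fun b hb => ?_
  rw [Finset.prod_const, Finset.prod_const,
    Finset.card_sdiff_of_subset (Finset.mem_powerset.mp hb)]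

lemma sum_supset_const_pow {k : ℕ} (S : Finset (Fin k)) (t u : ℝ) :
    ∑ a ∈ (Finset.univ : Finset (Fin k)).powerset.filter (fun a => S ⊆ a),
      t ^ a.card * u ^ (k - a.card) = t ^ S.card * (t + u) ^ (k - S.card) := by
  have hcard : Sᶜ.card = k - S.card := by
    rw [Finset.card_compl, Fintype.card_fin]
  rw [← hcard, ← sum_powerset_const_pow Sᶜ t u, Finset.mul_sum]
  refine Finset.sum_nbij' (fun a => a \ S) (fun b => S ∪ b) ?_ ?_ ?_ ?_ ?_
  · intro a ha
    simp only [Finset.mem_filter, Finset.mem_powerset] at ha ⊢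
    intro x hx
    simp only [Finset.mem_sdiff] at hx
    simp [hx.2]
  · intro b hb
    simp only [Finset.mem_powerset] at hb
    simp only [Finset.mem_filter, Finset.mem_powerset]
    exact ⟨Finset.subset_univ _, Finset.subset_union_left⟩
  · intro a ha
    simp only [Finset.mem_filter, Finset.mem_powerset] at ha
    exact Finset.union_sdiff_of_subset ha.2
  · intro b hb
    simp only [Finset.mem_powerset] at hb
    show (S ∪ b) \ S = b
    rw [Finset.union_sdiff_cancel_left]
    rw [Finset.disjoint_left]
    intro x hxS hxb
    exact (Finset.mem_compl.mp (hb hxb)) hxS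
  · intro a ha
    simp only [Finset.mem_filter, Finset.mem_powerset] at ha
    show t ^ a.card * u ^ (k - a.card) =
      t ^ S.card * (t ^ (a \ S).card * u ^ (Sᶜ.card - (a \ S).card))
    have hsub : S ⊆ a := ha.2
    have hdisj : Disjoint S (a \ S) := Finset.disjoint_sdiff
    have hcard2 : a.card = S.card + (a \ S).card := by
      rw [← Finset.card_union_of_disjoint hdisj, Finset.union_sdiff_of_subset hsub]
    have hSc : Sᶜ.card - (a \ S).card = k - a.card := by
      rw [hcard, hcard2]
      have h1 : S.card ≤ k := by
        simpa [Fintype.card_fin] using Finset.card_le_univ S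
      have h2 : (a \ S).card ≤ k - S.card := by
        have : a.card ≤ k := by simpa [Fintype.card_fin] using Finset.card_le_univ a
        omega
      omega
    rw [hSc, hcard2, pow_add, mul_assoc]

/-- Core inequality of the gate step: if `Σ_{supp(R) ⊆ a} f(R)² ≤ C·2^{|a|}` for every subset
`a ⊆ Fin k`, then `Σ_R μ^{2|supp(R)|}·f(R)² ≤ C·(1+μ²)^k`. -/
theorem gate_step_core_inequality (k : ℕ) (hk : 1 ≤ k) (μ C : ℝ)
    (hμ : μ ∈ Set.Icc (0 : ℝ) 1) (hC : 0 ≤ C)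
    (f : (Fin k → Fin 4) → ℝ)
    (hf : ∀ a : Finset (Fin k),
      ∑ R ∈ Finset.univ.filter (fun R : Fin k → Fin 4 => pauliSupp R ⊆ a), f R ^ 2 ≤
        C * 2 ^ a.card) :
    ∑ R : Fin k → Fin 4, μ ^ (2 * (pauliSupp R).card) * f R ^ 2 ≤ C * (1 + μ ^ 2) ^ k := by
  obtain ⟨hμ0, hμ1⟩ := hμ
  set t : ℝ := μ ^ 2 with ht
  set u : ℝ := 1 - μ ^ 2 with hu
  have ht0 : 0 ≤ t := sq_nonneg μ
  have hu0 : 0 ≤ u := by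
    rw [hu]; nlinarith
  have htu : t + u = 1 := by ring
  have key : ∀ R : Fin k → Fin 4, μ ^ (2 * (pauliSupp R).card) =
      ∑ a ∈ (Finset.univ : Finset (Fin k)).powerset.filter (fun a => pauliSupp R ⊆ a),
        t ^ a.card * u ^ (k - a.card) := by
    intro R
    rw [sum_supset_const_pow, htu, one_pow, mul_one, ht, ← pow_mul]
  calc ∑ R : Fin k → Fin 4, μ ^ (2 * (pauliSupp R).card) * f R ^ 2
      = ∑ R : Fin k → Fin 4,
          ∑ a ∈ (Finset.univ : Finset (Fin k)).powerset.filter (fun a => pauliSupp R ⊆ a),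
            t ^ a.card * u ^ (k - a.card) * f R ^ 2 := by
        refine Finset.sum_congr rfl fun R _ => ?_
        rw [key R, Finset.sum_mul]
    _ = ∑ R : Fin k → Fin 4, ∑ a ∈ (Finset.univ : Finset (Fin k)).powerset,
          if pauliSupp R ⊆ a then t ^ a.card * u ^ (k - a.card) * f R ^ 2 else 0 := by
        refine Finset.sum_congr rfl fun R _ => ?_
        rw [Finset.sum_filter]
    _ = ∑ a ∈ (Finset.univ : Finset (Fin k)).powerset, ∑ R : Fin k → Fin 4,
          if pauliSupp R ⊆ a then t ^ a.card * u ^ (k - a.card) * f R ^ 2 else 0 :=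
        Finset.sum_comm
    _ = ∑ a ∈ (Finset.univ : Finset (Fin k)).powerset,
          t ^ a.card * u ^ (k - a.card) *
            ∑ R ∈ Finset.univ.filter (fun R : Fin k → Fin 4 => pauliSupp R ⊆ a), f R ^ 2 := by
        refine Finset.sum_congr rfl fun a _ => ?_
        rw [Finset.mul_sum, Finset.sum_filter]
    _ ≤ ∑ a ∈ (Finset.univ : Finset (Fin k)).powerset,
          t ^ a.card * u ^ (k - a.card) * (C * 2 ^ a.card) := by
        refine Finset.sum_le_sum fun a _ => ?_
        exact mul_le_mul_of_nonneg_left (hf a)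
          (mul_nonneg (pow_nonneg ht0 _) (pow_nonneg hu0 _))
    _ = C * ∑ a ∈ (Finset.univ : Finset (Fin k)).powerset,
          (2 * t) ^ a.card * u ^ (k - a.card) := by
        rw [Finset.mul_sum]
        refine Finset.sum_congr rfl fun a _ => ?_
        rw [mul_pow]
        ring
    _ = C * (1 + μ ^ 2) ^ k := by
        have := sum_powerset_const_pow (Finset.univ : Finset (Fin k)) (2 * t) u
        rw [Finset.card_univ, Fintype.card_fin] at this
        rw [this, show (2 * t + u) = 1 + μ ^ 2 from by ring]
end
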